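/- The flow problems P_1^{xy+} and P_1^{xy-} are feasible. Precisely: (i) there exists g : B_2^{-xy} × (G_1^{-x} ∪ G_1^{-x•} ∪ B_1^{-xy}) → [0,∞) with g(b,a) = 0 unless η_a ≤ ξ_b, ∑_a g(b,a) = c^2_b for every b ∈ B_2^{-xy}, ∑_b g(b,a) ≤ f^x(B_2^{-xy}, a) for every a ∈ G_1^{-x} ∪ G_1^{-x•}, and ∑_b g(b,a) ≤ c^1_a for every a ∈ B_1^{-xy}; and (ii) there exists h : (G_2^{+x} ∪ G_2^{+x•} ∪ B_2^{+xy}) × B_1^{+xy} → [0,∞) with h(b,a) = 0 unless η_a ≤ ξ_b, ∑_b h(b,a) = c^1_a for every a ∈ B_1^{+xy}, ∑_a h(b,a) ≤ c^2_b for every b ∈ B_2^{+xy}, and ∑_a h(b,a) ≤ f^x(b, B_1^{+xy}) for every b ∈ G_2^{+x} ∪ G_2^{+x•}. -/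

import Mathlib

open scoped ENNReal

namespace IPS

/-- A change is identified with the function `δ : S → ℤ` that it adds (coordinatewise)
to a configuration.  `ChangeSet nbr x` is the set of changes involving site `x`:
add or subtract `k ≥ 1` individuals at `x`, or add `k` at `x` while subtracting `l ≥ 1`
at a neighbour `y` of `x` (or vice versa).  Note that with this encoding the maps
`σ_{xy}^{-k,l}` and `σ_{yx}^{+l,k}` automatically coincide. -/
def ChangeSet {S : Type*} [DecidableEq S] (nbr : S → S → Prop) (x : S) : Set (S → ℤ) :=
  {δ | (∃ k : ℤ, 0 < k ∧ (δ = Pi.single x k ∨ δ = Pi.single x (-k))) ∨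
       (∃ y, nbr x y ∧ ∃ k l : ℤ, 0 < k ∧ 0 < l ∧
          (δ = Pi.single x k + Pi.single y (-l) ∨ δ = Pi.single x (-k) + Pi.single y l))}

/-- The configuration resulting from applying change `δ` to `ζ`. -/
def app {S : Type*} (ζ δ : S → ℤ) : S → ℤ := ζ + δ

/-- `δ` is applicable to `ζ` if the resulting configuration stays in `W^S`. -/
def Applicable {S : Type*} (W : Set ℤ) (ζ δ : S → ℤ) : Prop := ∀ z, ζ z + δ z ∈ W

variable {S : Type*} [DecidableEq S]

def R1 (W : Set ℤ) (nbr : S → S → Prop) (x : S) (η ξ : S → ℤ) : Set (S → ℤ) :=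
  {a | a ∈ ChangeSet nbr x ∧ Applicable W η a ∧ ξ x < app η a x}

def S1 (W : Set ℤ) (nbr : S → S → Prop) (x : S) (η : S → ℤ) : Set (S → ℤ) :=
  {a | a ∈ ChangeSet nbr x ∧ Applicable W η a ∧ app η a x < η x}

def T1 (W : Set ℤ) (nbr : S → S → Prop) (x : S) (η ξ : S → ℤ) : Set (S → ℤ) :=
  S1 W nbr x η ∪ R1 W nbr x η ξ

def R2 (W : Set ℤ) (nbr : S → S → Prop) (x : S) (η ξ : S → ℤ) : Set (S → ℤ) :=
  {b | b ∈ ChangeSet nbr x ∧ Applicable W ξ b ∧ app ξ b x < η x}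

def S2 (W : Set ℤ) (nbr : S → S → Prop) (x : S) (ξ : S → ℤ) : Set (S → ℤ) :=
  {b | b ∈ ChangeSet nbr x ∧ Applicable W ξ b ∧ ξ x < app ξ b x}

def T2 (W : Set ℤ) (nbr : S → S → Prop) (x : S) (η ξ : S → ℤ) : Set (S → ℤ) :=
  S2 W nbr x ξ ∪ R2 W nbr x η ξ

/-- `f` is a solution to the flow problem `P^x`: it is supported on pairs
`(b, a) ∈ T_2^x × T_1^x` with `η_a ≤ ξ_b`, its column sums equal `c¹_a` on `R_1^x`
and are at most `c¹_a` on `S_1^x`, and its row sums equal `c²_b` on `R_2^x` and are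
at most `c²_b` on `S_2^x`. -/
structure IsSolution (W : Set ℤ) (nbr : S → S → Prop) (x : S) (η ξ : S → ℤ)
    (c1 c2 : (S → ℤ) → ℝ≥0∞) (f : (S → ℤ) → (S → ℤ) → ℝ≥0∞) : Prop where
  domain : ∀ b a, f b a ≠ 0 → b ∈ T2 W nbr x η ξ ∧ a ∈ T1 W nbr x η ξ
  order : ∀ b a, f b a ≠ 0 → app η a ≤ app ξ b
  eq_R1 : ∀ a ∈ R1 W nbr x η ξ, ∑' b : T2 W nbr x η ξ, f b.1 a = c1 a
  le_S1 : ∀ a ∈ S1 W nbr x η, ∑' b : T2 W nbr x η ξ, f b.1 a ≤ c1 a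
  eq_R2 : ∀ b ∈ R2 W nbr x η ξ, ∑' a : T1 W nbr x η ξ, f b a.1 = c2 b
  le_S2 : ∀ b ∈ S2 W nbr x ξ, ∑' a : T1 W nbr x η ξ, f b a.1 ≤ c2 b

/-- `D_1^↑`. -/
def upArrow (W : Set ℤ) (nbr : S → S → Prop) (x : S) (η ξ : S → ℤ)
    (D : Set (S → ℤ)) : Set (S → ℤ) :=
  {b | b ∈ ChangeSet nbr x ∧ Applicable W ξ b ∧ ∃ a ∈ D, app η a ≤ app ξ b}

/-- `D_2^↓`. -/
def downArrow (W : Set ℤ) (nbr : S → S → Prop) (x : S) (η ξ : S → ℤ)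
    (D : Set (S → ℤ)) : Set (S → ℤ) :=
  {a | a ∈ ChangeSet nbr x ∧ Applicable W η a ∧ ∃ b ∈ D, app η a ≤ app ξ b}

/-- Condition (C1). -/
def CondC1 (W : Set ℤ) (nbr : S → S → Prop) (x : S) (η ξ : S → ℤ)
    (c1 c2 : (S → ℤ) → ℝ≥0∞) : Prop :=
  ∀ D1 ⊆ R1 W nbr x η ξ, ∑' a : D1, c1 a.1 ≤ ∑' b : upArrow W nbr x η ξ D1, c2 b.1

/-- Condition (C2). -/
def CondC2 (W : Set ℤ) (nbr : S → S → Prop) (x : S) (η ξ : S → ℤ)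
    (c1 c2 : (S → ℤ) → ℝ≥0∞) : Prop :=
  ∀ D2 ⊆ R2 W nbr x η ξ, ∑' b : D2, c2 b.1 ≤ ∑' a : downArrow W nbr x η ξ D2, c1 a.1

/-- `C^{+x}` for the configuration `ζ`. -/
def Cplus (W : Set ℤ) (nbr : S → S → Prop) (x : S) (ζ : S → ℤ) : Set (S → ℤ) :=
  {a | a ∈ ChangeSet nbr x ∧ Applicable W ζ a ∧ ζ x < app ζ a x ∧ ∀ z, z ≠ x → app ζ a z = ζ z}

/-- `C^{-x}` for the configuration `ζ`. -/
def Cminus (W : Set ℤ) (nbr : S → S → Prop) (x : S) (ζ : S → ℤ) : Set (S → ℤ) :=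
  {a | a ∈ ChangeSet nbr x ∧ Applicable W ζ a ∧ app ζ a x < ζ x ∧ ∀ z, z ≠ x → app ζ a z = ζ z}

/-- `C^{+xy}` for the configuration `ζ`. -/
def CplusPair (W : Set ℤ) (nbr : S → S → Prop) (x : S) (ζ : S → ℤ) (y : S) : Set (S → ℤ) :=
  {a | a ∈ ChangeSet nbr x ∧ Applicable W ζ a ∧ ζ x < app ζ a x ∧ app ζ a y < ζ y}

/-- `C^{-xy}` for the configuration `ζ`. -/
def CminusPair (W : Set ℤ) (nbr : S → S → Prop) (x : S) (ζ : S → ℤ) (y : S) : Set (S → ℤ) :=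
  {a | a ∈ ChangeSet nbr x ∧ Applicable W ζ a ∧ app ζ a x < ζ x ∧ ζ y < app ζ a y}

/-- `C^{+x•}` for the configuration `ζ`. -/
def CplusBull (W : Set ℤ) (nbr : S → S → Prop) (x : S) (ζ : S → ℤ) : Set (S → ℤ) :=
  {a | ∃ y, nbr x y ∧ a ∈ CplusPair W nbr x ζ y}

/-- `C^{-x•}` for the configuration `ζ`. -/
def CminusBull (W : Set ℤ) (nbr : S → S → Prop) (x : S) (ζ : S → ℤ) : Set (S → ℤ) :=
  {a | ∃ y, nbr x y ∧ a ∈ CminusPair W nbr x ζ y}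

/-- `G_1^e`: the changes of `C` (for the first process) that preserve the order. -/
def G1 (η ξ : S → ℤ) (C : Set (S → ℤ)) : Set (S → ℤ) := {a | a ∈ C ∧ app η a ≤ ξ}

/-- `B_1^e`: the changes of `C` (for the first process) that break the order. -/
def B1 (η ξ : S → ℤ) (C : Set (S → ℤ)) : Set (S → ℤ) := {a | a ∈ C ∧ ¬ app η a ≤ ξ}

/-- `G_2^e`: the changes of `C` (for the second process) that preserve the order. -/
def G2 (η ξ : S → ℤ) (C : Set (S → ℤ)) : Set (S → ℤ) := {b | b ∈ C ∧ η ≤ app ξ b}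

/-- `B_2^e`: the changes of `C` (for the second process) that break the order. -/
def B2 (η ξ : S → ℤ) (C : Set (S → ℤ)) : Set (S → ℤ) := {b | b ∈ C ∧ ¬ η ≤ app ξ b}

/-! Both flows are restrictions of `f^x`. A change `b ∈ B_2^{-xy}` lowers `ξ` at `x` and raises it
only at `y`, so the order can only break at `x` and `b ∈ R_2^x`. A change `a ∈ T_1^x` coupled with
`b` (that is, `η_a ≤ ξ_b`) cannot raise `x` above `ξ_b x < ξ x`, so it lowers `x`; if it breaks
the order, it does so at the site it raises, which must be `y` because only there is `ξ_b` above
`ξ`. Hence the row of `f^x` at `b` lives in `G_1^{-x} ∪ G_1^{-x•} ∪ B_1^{-xy} ⊆ S_1^x`, and its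
restriction keeps the row sum `c²_b` while the column sums only drop. The problem `P_1^{xy+}` is
the mirror image, with columns `a ∈ B_1^{+xy} ⊆ R_1^x`. -/

@[simp]
theorem app_apply {S : Type*} (ζ δ : S → ℤ) (z : S) : app ζ δ z = ζ z + δ z := rfl

section ChangeSet

variable {nbr : S → S → Prop} {x v w : S} {δ : S → ℤ}

theorem nonneg_of_mem_changeSet_of_neg (hδ : δ ∈ ChangeSet nbr x) (hx : δ x < 0) (hw : w ≠ x) :
    0 ≤ δ w := by
  rcases hδ with ⟨k, hk, rfl | rfl⟩ | ⟨y, -, k, l, hk, hl, rfl | rfl⟩ <;>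
    grind [Pi.add_apply]

theorem nonpos_of_mem_changeSet_of_pos (hδ : δ ∈ ChangeSet nbr x) (hx : 0 < δ x) (hw : w ≠ x) :
    δ w ≤ 0 := by
  rcases hδ with ⟨k, hk, rfl | rfl⟩ | ⟨y, -, k, l, hk, hl, rfl | rfl⟩ <;>
    grind [Pi.add_apply]

theorem nbr_of_mem_changeSet (hδ : δ ∈ ChangeSet nbr x) (hw : w ≠ x) (hδw : δ w ≠ 0) :
    nbr x w := by
  rcases hδ with ⟨k, hk, rfl | rfl⟩ | ⟨y, hy, k, l, hk, hl, rfl | rfl⟩ <;>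
    grind [Pi.add_apply]

theorem eq_of_mem_changeSet (hδ : δ ∈ ChangeSet nbr x) (hv : v ≠ x) (hw : w ≠ x)
    (hδv : δ v ≠ 0) (hδw : δ w ≠ 0) : v = w := by
  rcases hδ with ⟨k, hk, rfl | rfl⟩ | ⟨y, hy, k, l, hk, hl, rfl | rfl⟩ <;>
    grind [Pi.add_apply]

end ChangeSet

section Changes

variable {nbr : S → S → Prop} {W : Set ℤ} {x y : S} {ζ η ξ a b : S → ℤ}

theorem mem_Cminus_or_mem_CminusBull (ha : a ∈ ChangeSet nbr x) (happ : Applicable W ζ a)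
    (hx : app ζ a x < ζ x) : a ∈ Cminus W nbr x ζ ∨ a ∈ CminusBull W nbr x ζ := by
  by_cases hpure : ∀ z, z ≠ x → app ζ a z = ζ z
  · exact Or.inl ⟨ha, happ, hx, hpure⟩
  push Not at hpure
  obtain ⟨z, hzx, hz⟩ := hpure
  have haz : a z ≠ 0 := by simpa using hz
  have hax : a x < 0 := by simp only [app_apply] at hx; omega
  have := nonneg_of_mem_changeSet_of_neg ha hax hzx
  exact Or.inr ⟨z, nbr_of_mem_changeSet ha hzx haz, ha, happ, hx, by simp only [app_apply]; omega⟩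

theorem mem_Cplus_or_mem_CplusBull (hb : b ∈ ChangeSet nbr x) (happ : Applicable W ζ b)
    (hx : ζ x < app ζ b x) : b ∈ Cplus W nbr x ζ ∨ b ∈ CplusBull W nbr x ζ := by
  by_cases hpure : ∀ z, z ≠ x → app ζ b z = ζ z
  · exact Or.inl ⟨hb, happ, hx, hpure⟩
  push Not at hpure
  obtain ⟨z, hzx, hz⟩ := hpure
  have hbz : b z ≠ 0 := by simpa using hz
  have hbx : 0 < b x := by simp only [app_apply] at hx; omega
  have := nonpos_of_mem_changeSet_of_pos hb hbx hzx
  exact Or.inr ⟨z, nbr_of_mem_changeSet hb hzx hbz, hb, happ, hx, by simp only [app_apply]; omega⟩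

theorem B2_CminusPair_subset_R2 (hle : η ≤ ξ) :
    B2 η ξ (CminusPair W nbr x ξ y) ⊆ R2 W nbr x η ξ := by
  rintro b ⟨⟨hb, happ, hx, -⟩, hbad⟩
  obtain ⟨w, hw⟩ : ∃ w, app ξ b w < η w := by simpa [Pi.le_def] using hbad
  obtain rfl : w = x := by
    by_contra hwx
    have := nonneg_of_mem_changeSet_of_neg hb (by simp only [app_apply] at hx; omega) hwx
    have hlew : η w ≤ ξ w := hle w
    simp only [app_apply] at hw
    omega
  exact ⟨hb, happ, hw⟩

theorem B1_CplusPair_subset_R1 (hle : η ≤ ξ) :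
    B1 η ξ (CplusPair W nbr x η y) ⊆ R1 W nbr x η ξ := by
  rintro a ⟨⟨ha, happ, hx, -⟩, hbad⟩
  obtain ⟨w, hw⟩ : ∃ w, ξ w < app η a w := by simpa [Pi.le_def] using hbad
  obtain rfl : w = x := by
    by_contra hwx
    have := nonpos_of_mem_changeSet_of_pos ha (by simp only [app_apply] at hx; omega) hwx
    have hlew : η w ≤ ξ w := hle w
    simp only [app_apply] at hw
    omega
  exact ⟨ha, happ, hw⟩

theorem G1_Cminus_union_subset_S1 :
    G1 η ξ (Cminus W nbr x η) ∪ G1 η ξ (CminusBull W nbr x η) ∪ B1 η ξ (CminusPair W nbr x η y) ⊆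
      S1 W nbr x η := by
  rintro a ((⟨⟨ha, happ, hx, -⟩, -⟩ | ⟨⟨-, -, ha, happ, hx, -⟩, -⟩) | ⟨⟨ha, happ, hx, -⟩, -⟩) <;>
    exact ⟨ha, happ, hx⟩

theorem G2_Cplus_union_subset_S2 :
    G2 η ξ (Cplus W nbr x ξ) ∪ G2 η ξ (CplusBull W nbr x ξ) ∪ B2 η ξ (CplusPair W nbr x ξ y) ⊆
      S2 W nbr x ξ := by
  rintro b ((⟨⟨hb, happ, hx, -⟩, -⟩ | ⟨⟨-, -, hb, happ, hx, -⟩, -⟩) | ⟨⟨hb, happ, hx, -⟩, -⟩) <;>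
    exact ⟨hb, happ, hx⟩

theorem mem_G1_Cminus_union_of_mem_B2_CminusPair (hle : η ≤ ξ)
    (hb : b ∈ B2 η ξ (CminusPair W nbr x ξ y)) (ha : a ∈ T1 W nbr x η ξ)
    (hab : app η a ≤ app ξ b) :
    a ∈ G1 η ξ (Cminus W nbr x η) ∪ G1 η ξ (CminusBull W nbr x η) ∪
      B1 η ξ (CminusPair W nbr x η y) := by
  obtain ⟨⟨hbC, -, hbx, hby⟩, -⟩ := hb
  simp only [app_apply] at hbx hby
  obtain ⟨haC, happ, hax⟩ : a ∈ S1 W nbr x η := ha.resolve_right fun ⟨_, _, h⟩ => by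
    have habx := hab x
    simp only [app_apply] at h habx
    omega
  by_cases hgood : app η a ≤ ξ
  · exact Or.inl ((mem_Cminus_or_mem_CminusBull haC happ hax).imp (⟨·, hgood⟩) (⟨·, hgood⟩))
  refine Or.inr ⟨⟨haC, happ, hax, ?_⟩, hgood⟩
  obtain ⟨w, hw⟩ : ∃ w, ξ w < app η a w := by simpa [Pi.le_def] using hgood
  have hw' := hab w
  simp only [app_apply] at hax hw hw' ⊢
  have hlew : η w ≤ ξ w := hle w
  have hwx : w ≠ x := by
    rintro rfl
    omega
  -- `a` breaks the order at `w`, so `ξ_b` lies above `ξ` there, which only happens at `y`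
  obtain rfl : w = y :=
    eq_of_mem_changeSet hbC hwx (by rintro rfl; omega) (by omega) (by omega)
  omega

theorem mem_G2_Cplus_union_of_mem_B1_CplusPair (hle : η ≤ ξ)
    (ha : a ∈ B1 η ξ (CplusPair W nbr x η y)) (hb : b ∈ T2 W nbr x η ξ)
    (hab : app η a ≤ app ξ b) :
    b ∈ G2 η ξ (Cplus W nbr x ξ) ∪ G2 η ξ (CplusBull W nbr x ξ) ∪
      B2 η ξ (CplusPair W nbr x ξ y) := by
  obtain ⟨⟨haC, -, hax, hay⟩, -⟩ := ha
  simp only [app_apply] at hax hay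
  obtain ⟨hbC, happ, hbx⟩ : b ∈ S2 W nbr x ξ := hb.resolve_right fun ⟨_, _, h⟩ => by
    have habx := hab x
    simp only [app_apply] at h habx
    omega
  by_cases hgood : η ≤ app ξ b
  · exact Or.inl ((mem_Cplus_or_mem_CplusBull hbC happ hbx).imp (⟨·, hgood⟩) (⟨·, hgood⟩))
  refine Or.inr ⟨⟨hbC, happ, hbx, ?_⟩, hgood⟩
  obtain ⟨w, hw⟩ : ∃ w, app ξ b w < η w := by simpa [Pi.le_def] using hgood
  have hw' := hab w
  simp only [app_apply] at hbx hw hw' ⊢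
  have hlew : η w ≤ ξ w := hle w
  have hwx : w ≠ x := by
    rintro rfl
    omega
  -- `b` breaks the order at `w`, so `η_a` lies below `η` there, which only happens at `y`
  obtain rfl : w = y :=
    eq_of_mem_changeSet haC hwx (by rintro rfl; omega) (by omega) (by omega)
  omega

end Changes

namespace IsSolution

variable {nbr : S → S → Prop} {W : Set ℤ} {x : S} {η ξ : S → ℤ} {c1 c2 : (S → ℤ) → ℝ≥0∞}
  {f : (S → ℤ) → (S → ℤ) → ℝ≥0∞} {B A : Set (S → ℤ)}

theorem exists_restrict_rows (hf : IsSolution W nbr x η ξ c1 c2 f) (hfT : ∀ b a, f b a ≠ ⊤)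
    (hB : B ⊆ R2 W nbr x η ξ) (hA : A ⊆ S1 W nbr x η)
    (hBA : ∀ b ∈ B, ∀ a ∈ T1 W nbr x η ξ, app η a ≤ app ξ b → a ∈ A) :
    ∃ g : (S → ℤ) → (S → ℤ) → ℝ≥0∞, (∀ b a, g b a ≠ ⊤) ∧
      (∀ b a, g b a ≠ 0 → b ∈ B ∧ a ∈ A ∧ app η a ≤ app ξ b) ∧
      (∀ b ∈ B, ∑' a : A, g b a = c2 b) ∧
      (∀ a, ∑' b : B, g b a ≤ ∑' b : B, f b a) ∧
      (∀ a ∈ A, ∑' b : B, g b a ≤ c1 a) := by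
  let g b a := (B ×ˢ A).indicator (Function.uncurry f) (b, a)
  have hgf b a : g b a ≤ f b a := Set.indicator_le_self _ _ _
  refine ⟨g, fun b a => ne_top_of_le_ne_top (hfT b a) (hgf b a), fun b a hg => ?_,
    fun b hb => ?_, fun a => ENNReal.tsum_le_tsum fun b => hgf b a, fun a ha => ?_⟩
  · obtain ⟨⟨hb, ha⟩, hfba⟩ := Set.indicator_apply_ne_zero.1 hg
    exact ⟨hb, ha, hf.order b a hfba⟩
  · have hsupp : Function.support (f b) ⊆ A := fun a hfba =>
      hBA b hb a (hf.domain b a hfba).2 (hf.order b a hfba)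
    calc ∑' a : A, g b a = ∑' a : A, f b a :=
          tsum_congr fun a => Set.indicator_of_mem (Set.mk_mem_prod hb a.2) _
      _ = ∑' a : T1 W nbr x η ξ, f b a := by
          rw [tsum_subtype_eq_of_support_subset hsupp,
            tsum_subtype_eq_of_support_subset fun a hfba => (hf.domain b a hfba).2]
      _ = c2 b := hf.eq_R2 b (hB hb)
  · calc ∑' b : B, g b a ≤ ∑' b : B, f b a := ENNReal.tsum_le_tsum fun b => hgf b a
      _ ≤ ∑' b : T2 W nbr x η ξ, f b a :=
          ENNReal.tsum_mono_subtype (f · a) (hB.trans Set.subset_union_right)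
      _ ≤ c1 a := hf.le_S1 a (hA ha)

theorem exists_restrict_cols (hf : IsSolution W nbr x η ξ c1 c2 f) (hfT : ∀ b a, f b a ≠ ⊤)
    (hB : B ⊆ S2 W nbr x ξ) (hA : A ⊆ R1 W nbr x η ξ)
    (hAB : ∀ a ∈ A, ∀ b ∈ T2 W nbr x η ξ, app η a ≤ app ξ b → b ∈ B) :
    ∃ h : (S → ℤ) → (S → ℤ) → ℝ≥0∞, (∀ b a, h b a ≠ ⊤) ∧
      (∀ b a, h b a ≠ 0 → b ∈ B ∧ a ∈ A ∧ app η a ≤ app ξ b) ∧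
      (∀ a ∈ A, ∑' b : B, h b a = c1 a) ∧
      (∀ b ∈ B, ∑' a : A, h b a ≤ c2 b) ∧
      (∀ b, ∑' a : A, h b a ≤ ∑' a : A, f b a) := by
  let h b a := (B ×ˢ A).indicator (Function.uncurry f) (b, a)
  have hhf b a : h b a ≤ f b a := Set.indicator_le_self _ _ _
  refine ⟨h, fun b a => ne_top_of_le_ne_top (hfT b a) (hhf b a), fun b a hh => ?_,
    fun a ha => ?_, fun b hb => ?_, fun b => ENNReal.tsum_le_tsum fun a => hhf b a⟩
  · obtain ⟨⟨hb, ha⟩, hfba⟩ := Set.indicator_apply_ne_zero.1 hh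
    exact ⟨hb, ha, hf.order b a hfba⟩
  · have hsupp : Function.support (f · a) ⊆ B := fun b hfba =>
      hAB a ha b (hf.domain b a hfba).1 (hf.order b a hfba)
    calc ∑' b : B, h b a = ∑' b : B, f b a :=
          tsum_congr fun b => Set.indicator_of_mem (Set.mk_mem_prod b.2 ha) _
      _ = ∑' b : T2 W nbr x η ξ, f b a := by
          rw [tsum_subtype_eq_of_support_subset hsupp,
            tsum_subtype_eq_of_support_subset fun b hfba => (hf.domain b a hfba).1]
      _ = c1 a := hf.eq_R1 a (hA ha)
  · calc ∑' a : A, h b a ≤ ∑' a : A, f b a := ENNReal.tsum_le_tsum fun a => hhf b a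
      _ ≤ ∑' a : T1 W nbr x η ξ, f b a :=
          ENNReal.tsum_mono_subtype (f b) (hA.trans Set.subset_union_right)
      _ ≤ c2 b := hf.le_S2 b (hB hb)

end IsSolution

theorem feasibility_of_P1xy_general
    {S : Type*} [DecidableEq S] (nbr : S → S → Prop) (W : Set ℤ) (η ξ : S → ℤ) (hle : η ≤ ξ)
    (x y : S) (c1 c2 : (S → ℤ) → ℝ≥0∞) (fx : (S → ℤ) → (S → ℤ) → ℝ≥0∞) (hfxT : ∀ b a, fx b a ≠ ⊤)
    (hfx : IsSolution W nbr x η ξ c1 c2 fx) :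
    (∃ g : (S → ℤ) → (S → ℤ) → ℝ≥0∞, (∀ b a, g b a ≠ ⊤) ∧
      (∀ b a, g b a ≠ 0 →
        b ∈ B2 η ξ (CminusPair W nbr x ξ y) ∧
        a ∈ G1 η ξ (Cminus W nbr x η) ∪ G1 η ξ (CminusBull W nbr x η) ∪
            B1 η ξ (CminusPair W nbr x η y) ∧
        app η a ≤ app ξ b) ∧
      (∀ b ∈ B2 η ξ (CminusPair W nbr x ξ y),
        ∑' a : (G1 η ξ (Cminus W nbr x η) ∪ G1 η ξ (CminusBull W nbr x η) ∪
            B1 η ξ (CminusPair W nbr x η y) : Set (S → ℤ)), g b a.1 = c2 b) ∧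
      (∀ a ∈ G1 η ξ (Cminus W nbr x η) ∪ G1 η ξ (CminusBull W nbr x η),
        ∑' b : B2 η ξ (CminusPair W nbr x ξ y), g b.1 a ≤
          ∑' b : B2 η ξ (CminusPair W nbr x ξ y), fx b.1 a) ∧
      (∀ a ∈ B1 η ξ (CminusPair W nbr x η y),
        ∑' b : B2 η ξ (CminusPair W nbr x ξ y), g b.1 a ≤ c1 a)) ∧
    (∃ h : (S → ℤ) → (S → ℤ) → ℝ≥0∞, (∀ b a, h b a ≠ ⊤) ∧
      (∀ b a, h b a ≠ 0 →
        b ∈ G2 η ξ (Cplus W nbr x ξ) ∪ G2 η ξ (CplusBull W nbr x ξ) ∪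
            B2 η ξ (CplusPair W nbr x ξ y) ∧
        a ∈ B1 η ξ (CplusPair W nbr x η y) ∧
        app η a ≤ app ξ b) ∧
      (∀ a ∈ B1 η ξ (CplusPair W nbr x η y),
        ∑' b : (G2 η ξ (Cplus W nbr x ξ) ∪ G2 η ξ (CplusBull W nbr x ξ) ∪
            B2 η ξ (CplusPair W nbr x ξ y) : Set (S → ℤ)), h b.1 a = c1 a) ∧
      (∀ b ∈ B2 η ξ (CplusPair W nbr x ξ y),
        ∑' a : B1 η ξ (CplusPair W nbr x η y), h b a.1 ≤ c2 b) ∧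
      (∀ b ∈ G2 η ξ (Cplus W nbr x ξ) ∪ G2 η ξ (CplusBull W nbr x ξ),
        ∑' a : B1 η ξ (CplusPair W nbr x η y), h b a.1 ≤
          ∑' a : B1 η ξ (CplusPair W nbr x η y), fx b a.1)) := by
  obtain ⟨g, hgT, hg0, hgrow, hgcol, hgc1⟩ :=
    hfx.exists_restrict_rows hfxT (B2_CminusPair_subset_R2 hle) G1_Cminus_union_subset_S1
      fun _ hb _ ha hab => mem_G1_Cminus_union_of_mem_B2_CminusPair hle hb ha hab
  obtain ⟨h, hhT, hh0, hhcol, hhc2, hhrow⟩ :=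
    hfx.exists_restrict_cols hfxT G2_Cplus_union_subset_S2 (B1_CplusPair_subset_R1 hle)
      fun _ ha _ hb hab => mem_G2_Cplus_union_of_mem_B1_CplusPair hle ha hb hab
  exact ⟨⟨g, hgT, hg0, hgrow, fun a _ => hgcol a, fun a ha => hgc1 a (Or.inr ha)⟩,
    ⟨h, hhT, hh0, hhcol, fun b hb => hhc2 b (Or.inr hb), fun b _ => hhrow b⟩⟩

/-- the flow problems `P_1^{xy+}` and `P_1^{xy-}` are feasible. -/
theorem feasibility_of_P1xy
    {S : Type*} [Countable S] [DecidableEq S]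
    (nbr : S → S → Prop) (hsym : ∀ u v, nbr u v → nbr v u) (hirr : ∀ u, ¬ nbr u u)
    (W : Set ℤ) (hW : ∀ w ∈ W, 0 ≤ w)
    (η ξ : S → ℤ) (hηΩ : ∀ z, η z ∈ W) (hξΩ : ∀ z, ξ z ∈ W) (hle : η ≤ ξ)
    (x y : S) (hxy : nbr x y)
    (c1 c2 : (S → ℤ) → ℝ≥0∞)
    (hc1 : ∀ a, c1 a ≠ 0 → a ∈ ChangeSet nbr x ∪ ChangeSet nbr y ∧ Applicable W η a)
    (hc2 : ∀ b, c2 b ≠ 0 → b ∈ ChangeSet nbr x ∪ ChangeSet nbr y ∧ Applicable W ξ b)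
    (hfin : ∑' a : (ChangeSet nbr x ∪ ChangeSet nbr y : Set (S → ℤ)), (c1 a.1 + c2 a.1) ≠ ⊤)
    (fx : (S → ℤ) → (S → ℤ) → ℝ≥0∞) (hfxT : ∀ b a, fx b a ≠ ⊤)
    (hfx : IsSolution W nbr x η ξ c1 c2 fx)
    (hfx0 : ∀ b ∈ S2 W nbr x ξ, ∀ a ∈ S1 W nbr x η, fx b a = 0)
    (fy : (S → ℤ) → (S → ℤ) → ℝ≥0∞) (hfyT : ∀ b a, fy b a ≠ ⊤)
    (hfy : IsSolution W nbr y η ξ c1 c2 fy)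
    (hfy0 : ∀ b ∈ S2 W nbr y ξ, ∀ a ∈ S1 W nbr y η, fy b a = 0)
    :
    (∃ g : (S → ℤ) → (S → ℤ) → ℝ≥0∞, (∀ b a, g b a ≠ ⊤) ∧
      (∀ b a, g b a ≠ 0 →
        b ∈ B2 η ξ (CminusPair W nbr x ξ y) ∧
        a ∈ G1 η ξ (Cminus W nbr x η) ∪ G1 η ξ (CminusBull W nbr x η) ∪
            B1 η ξ (CminusPair W nbr x η y) ∧
        app η a ≤ app ξ b) ∧
      (∀ b ∈ B2 η ξ (CminusPair W nbr x ξ y),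
        ∑' a : (G1 η ξ (Cminus W nbr x η) ∪ G1 η ξ (CminusBull W nbr x η) ∪
            B1 η ξ (CminusPair W nbr x η y) : Set (S → ℤ)), g b a.1 = c2 b) ∧
      (∀ a ∈ G1 η ξ (Cminus W nbr x η) ∪ G1 η ξ (CminusBull W nbr x η),
        ∑' b : B2 η ξ (CminusPair W nbr x ξ y), g b.1 a ≤
          ∑' b : B2 η ξ (CminusPair W nbr x ξ y), fx b.1 a) ∧
      (∀ a ∈ B1 η ξ (CminusPair W nbr x η y),
        ∑' b : B2 η ξ (CminusPair W nbr x ξ y), g b.1 a ≤ c1 a)) ∧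
    (∃ h : (S → ℤ) → (S → ℤ) → ℝ≥0∞, (∀ b a, h b a ≠ ⊤) ∧
      (∀ b a, h b a ≠ 0 →
        b ∈ G2 η ξ (Cplus W nbr x ξ) ∪ G2 η ξ (CplusBull W nbr x ξ) ∪
            B2 η ξ (CplusPair W nbr x ξ y) ∧
        a ∈ B1 η ξ (CplusPair W nbr x η y) ∧
        app η a ≤ app ξ b) ∧
      (∀ a ∈ B1 η ξ (CplusPair W nbr x η y),
        ∑' b : (G2 η ξ (Cplus W nbr x ξ) ∪ G2 η ξ (CplusBull W nbr x ξ) ∪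
            B2 η ξ (CplusPair W nbr x ξ y) : Set (S → ℤ)), h b.1 a = c1 a) ∧
      (∀ b ∈ B2 η ξ (CplusPair W nbr x ξ y),
        ∑' a : B1 η ξ (CplusPair W nbr x η y), h b a.1 ≤ c2 b) ∧
      (∀ b ∈ G2 η ξ (Cplus W nbr x ξ) ∪ G2 η ξ (CplusBull W nbr x ξ),
        ∑' a : B1 η ξ (CplusPair W nbr x η y), h b a.1 ≤
          ∑' a : B1 η ξ (CplusPair W nbr x η y), fx b a.1)) :=
  feasibility_of_P1xy_general nbr W η ξ hle x y c1 c2 fx hfxT hfx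

end IPS
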